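/- arXiv:2008.00138 — 3 statements merged into one kernel-verified Lean document; each statement's English description precedes it below -/
import Mathlib

section
/- Let D be a finite nonempty probability space and π̂ : D → Δ^{c−1} a family of strictly positive probability vectors. Define π* componentwise by π*ᵢ = (∏_d π̂ᵢ(d)^{p(d)}) / Z, the normalized weighted geometric mean where p(d) are the probabilities on D and Z = Σⱼ ∏_d π̂ⱼ(d)^{p(d)}. Then for every strictly positive probability vector z ∈ Δ^{c−1}, E_D[D_KL(z ‖ π̂(d))] = D_KL(z ‖ π*) − log Z, and consequently π* is the unique minimizer over the open simplex of z ↦ E_D[D_KL(z ‖ π̂(d))]. -/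
/-!
Since `log π*ᵢ = E_D[log π̂ᵢ] - log Z` for every class `i`, averaging `log (zᵢ / π̂ᵢ(d))` over `D`
gives `log (zᵢ / π*ᵢ) - log Z`; summing against `z` yields the decomposition. Uniqueness of the
minimizer is then the strict Gibbs inequality `D_KL(z ‖ π*) > 0` for `z ≠ π*`, which follows
termwise from `z log (z / q) = q · klFun (z / q) + (z - q)` and `klFun x > 0` for `x ≠ 1`.
-/

open Finset Real InformationTheory

noncomputable section

namespace KLMean

def discreteKL {ι : Type*} [Fintype ι] (z q : ι → ℝ) : ℝ :=
  ∑ i, z i * log (z i / q i)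

section Gibbs

variable {ι : Type*} [Fintype ι]

theorem mul_log_div_eq_mul_klFun_add {z q : ℝ} (hq : q ≠ 0) :
    z * log (z / q) = q * klFun (z / q) + (z - q) := by
  rw [klFun_apply]
  field_simp
  ring

@[simp]
theorem discreteKL_self (q : ι → ℝ) : discreteKL q q = 0 := by
  refine sum_eq_zero fun i _ => ?_
  rcases eq_or_ne (q i) 0 with hqi | hqi
  · simp [hqi]
  · simp [div_self hqi]

theorem discreteKL_pos {z q : ι → ℝ} (hz : ∀ i, 0 ≤ z i) (hq : ∀ i, 0 < q i)
    (hsum : ∑ i, z i = ∑ i, q i) (hne : z ≠ q) : 0 < discreteKL z q := by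
  have hterm : ∀ i, z i * log (z i / q i) = q i * klFun (z i / q i) + (z i - q i) :=
    fun i => mul_log_div_eq_mul_klFun_add (hq i).ne'
  have hratio : ∀ i, 0 ≤ z i / q i := fun i => div_nonneg (hz i) (hq i).le
  obtain ⟨i₀, hi₀⟩ : ∃ i, z i ≠ q i := Function.ne_iff.mp hne
  have hkl_pos : 0 < klFun (z i₀ / q i₀) :=
    (klFun_nonneg (hratio i₀)).lt_of_ne' fun h =>
      hi₀ ((div_eq_one_iff_eq (hq i₀).ne').mp ((klFun_eq_zero_iff (hratio i₀)).mp h))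
  calc 0 < ∑ i, q i * klFun (z i / q i) :=
        sum_pos' (fun i _ => mul_nonneg (hq i).le (klFun_nonneg (hratio i)))
          ⟨i₀, mem_univ _, mul_pos (hq i₀) hkl_pos⟩
    _ = discreteKL z q := by
        simp only [discreteKL, hterm, sum_add_distrib, sum_sub_distrib, hsum, sub_self, add_zero]

end Gibbs

section Decomposition

variable {ι D : Type*} [Fintype ι] [Fintype D]

theorem mul_log_div_eq_add {x a b : ℝ} (ha : a ≠ 0) (hb : b ≠ 0) :
    x * log (x / a) = x * log (x / b) + x * log (b / a) := by
  rcases eq_or_ne x 0 with rfl | hx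
  · simp
  · rw [← mul_add, ← log_mul (div_ne_zero hx hb) (div_ne_zero hb ha), div_mul_div_cancel₀ hb]

theorem sum_mul_discreteKL_eq {p : D → ℝ} (hp : ∑ d, p d = 1) {ρ : D → ι → ℝ}
    (hρ : ∀ d i, ρ d i ≠ 0) (z : ι → ℝ) {q : ι → ℝ} (hq : ∀ i, q i ≠ 0) :
    ∑ d, p d * discreteKL z (ρ d) =
      discreteKL z q + ∑ i, z i * ∑ d, p d * log (q i / ρ d i) := by
  simp only [discreteKL, fun d i => mul_log_div_eq_add (x := z i) (hρ d i) (hq i), mul_sum,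
    mul_add, sum_add_distrib]
  congr 1 <;> rw [sum_comm]
  · simp only [← sum_mul, hp, one_mul]
  · exact sum_congr rfl fun i _ => sum_congr rfl fun d _ => by ring

theorem sum_mul_log_prod_rpow_div {p : D → ℝ} (hp : ∑ d, p d = 1) {w : D → ℝ}
    (hw : ∀ d, 0 < w d) {Z : ℝ} (hZ : Z ≠ 0) :
    ∑ d, p d * log ((∏ d', w d' ^ p d') / Z / w d) = -log Z := by
  have hprod : (∏ d, w d ^ p d) ≠ 0 :=
    (prod_pos fun d _ => rpow_pos_of_pos (hw d) _).ne'
  have hlog_prod : log (∏ d, w d ^ p d) = ∑ d, p d * log (w d) := by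
    rw [log_prod fun d _ => (rpow_pos_of_pos (hw d) _).ne']
    exact sum_congr rfl fun d _ => log_rpow (hw d) _
  simp only [log_div (div_ne_zero hprod hZ) (hw _).ne', log_div hprod hZ, hlog_prod, mul_sub,
    sum_sub_distrib, ← sum_mul, hp, one_mul]
  ring

end Decomposition

end KLMean

end

open KLMean in
theorem kl_mean_is_normalized_geometric_mean_general
    {D : Type*} [Fintype D] (c : ℕ)
    (p : D → ℝ) (hp1 : ∑ d, p d = 1)
    (πh : D → Fin c → ℝ)
    (hπh0 : ∀ d i, 0 < πh d i)
    (Z : ℝ) (hZ : Z = ∑ j, ∏ d, πh d j ^ p d)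
    (πs : Fin c → ℝ) (hπs : ∀ i, πs i = (∏ d, πh d i ^ p d) / Z) :
    (∀ z : Fin c → ℝ, (∀ i, 0 < z i) → ∑ i, z i = 1 →
        ∑ d, p d * (∑ i, z i * Real.log (z i / πh d i)) =
          (∑ i, z i * Real.log (z i / πs i)) - Real.log Z)
    ∧
    (∀ z : Fin c → ℝ, (∀ i, 0 < z i) → ∑ i, z i = 1 → z ≠ πs →
        ∑ d, p d * (∑ i, πs i * Real.log (πs i / πh d i)) <
          ∑ d, p d * (∑ i, z i * Real.log (z i / πh d i))) := by
  have hgeom : ∀ i, 0 < ∏ d, πh d i ^ p d := fun i =>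
    prod_pos fun d _ => Real.rpow_pos_of_pos (hπh0 d i) _
  have hZ_pos : ∀ z : Fin c → ℝ, ∑ i, z i = 1 → 0 < Z := fun z hz1 =>
    hZ ▸ sum_pos (fun j _ => hgeom j) (nonempty_of_sum_ne_zero (hz1 ▸ one_ne_zero))
  have decomp : ∀ z : Fin c → ℝ, ∑ i, z i = 1 →
      ∑ d, p d * discreteKL z (πh d) = discreteKL z πs - Real.log Z := by
    intro z hz1
    have hZ0 := (hZ_pos z hz1).ne'
    rw [sum_mul_discreteKL_eq hp1 (fun d i => (hπh0 d i).ne') z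
      (q := πs) fun i => hπs i ▸ div_ne_zero (hgeom i).ne' hZ0]
    have hlog_avg : ∀ i, ∑ d, p d * Real.log (πs i / πh d i) = -Real.log Z := fun i => by
      simpa only [hπs] using sum_mul_log_prod_rpow_div hp1 (fun d => hπh0 d i) hZ0
    simp only [hlog_avg, ← sum_mul, hz1]
    ring
  refine ⟨fun z _ hz1 => decomp z hz1, fun z hz0 hz1 hne => ?_⟩
  have hZ0 := hZ_pos z hz1
  have hπs_pos : ∀ i, 0 < πs i := fun i => hπs i ▸ div_pos (hgeom i) hZ0
  have hπs_sum : ∑ i, πs i = 1 := by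
    simp only [hπs, ← sum_div, ← hZ, div_self hZ0.ne']
  have hgibbs := discreteKL_pos (fun i => (hz0 i).le) hπs_pos (hz1.trans hπs_sum.symm) hne
  change ∑ d, p d * discreteKL πs (πh d) < ∑ d, p d * discreteKL z (πh d)
  rw [decomp z hz1, decomp πs hπs_sum, discreteKL_self]
  linarith

/-- The 'KL-mean' predictor π* = argmin_z E_D[D_KL(z ‖ π̂(d))] is the
normalized weighted geometric mean of the predictors:
E_D[D_KL(z ‖ π̂(d))] = D_KL(z ‖ π*) − log Z, and π* is the unique minimizer
over the open simplex. -/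
theorem kl_mean_is_normalized_geometric_mean
    {D : Type*} [Fintype D] [Nonempty D] (c : ℕ)
    (p : D → ℝ) (hp0 : ∀ d, 0 ≤ p d) (hp1 : ∑ d, p d = 1)
    (πh : D → Fin c → ℝ)
    (hπh0 : ∀ d i, 0 < πh d i) (hπh1 : ∀ d, ∑ i, πh d i = 1)
    (Z : ℝ) (hZ : Z = ∑ j, ∏ d, πh d j ^ p d)
    (πs : Fin c → ℝ) (hπs : ∀ i, πs i = (∏ d, πh d i ^ p d) / Z) :
    (∀ z : Fin c → ℝ, (∀ i, 0 < z i) → ∑ i, z i = 1 →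
        ∑ d, p d * (∑ i, z i * Real.log (z i / πh d i)) =
          (∑ i, z i * Real.log (z i / πs i)) - Real.log Z)
    ∧
    (∀ z : Fin c → ℝ, (∀ i, 0 < z i) → ∑ i, z i = 1 → z ≠ πs →
        ∑ d, p d * (∑ i, πs i * Real.log (πs i / πh d i)) <
          ∑ d, p d * (∑ i, z i * Real.log (z i / πh d i))) :=
  kl_mean_is_normalized_geometric_mean_general c p hp1 πh hπh0 Z hZ πs hπs
end

section
/- Let X and D be finite nonempty probability spaces, π : X → Δ^{c−1} one-hot ground-truth vectors with class t(x), π̂ : D → X → Δ^{c−1} strictly positive predictors, and π* : X → Δ^{c−1} strictly positive. Then the expected cross-entropy loss satisfies E_{x,d}[−log π̂_{t(x)}(d,x)] = E_x[D_KL(π(x) ‖ π*(x))] + E_{x,d}[D_KL(π*(x) ‖ π̂(d,x))] + E_{x,d}[Σᵢ (πᵢ(x) − π*ᵢ(x)) · log(π*ᵢ(x)/π̂ᵢ(d,x))], and the last term vanishes whenever, for each x, π*(x) is the normalized geometric mean of d ↦ π̂(d,x). -/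
/-!
Since `log (a / c) = log (a / b) + log (b / c)`, the log-loss `-log π̂_t = Σᵢ πᵢ log (πᵢ / π̂ᵢ)`
of a one-hot `π` splits pointwise into `D_KL(π ‖ π*) + Σᵢ πᵢ log (π*ᵢ / π̂ᵢ)`, and the second
summand is `D_KL(π* ‖ π̂)` plus the cross term. If `π*` is the normalized geometric mean of the
predictors, then averaging `log (π*ᵢ / π̂ᵢ)` over `d` gives `-log` of the normalizing constant,
independently of `i`; the cross term becomes that constant times `Σᵢ (πᵢ - π*ᵢ) = 1 - 1`.
-/

open Finset

section CrossEntropy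

-- Scoped, since `open Real` would turn the variable `π` of the final theorem into `Real.pi`.
open Real

section Pointwise

variable {ι : Type*} [Fintype ι]

theorem sum_mul_log_div_add_sum_mul_log_div (p : ι → ℝ) {q r : ι → ℝ}
    (hq : ∀ i, q i ≠ 0) (hr : ∀ i, r i ≠ 0) :
    ∑ i, p i * log (p i / q i) + ∑ i, p i * log (q i / r i) = ∑ i, p i * log (p i / r i) := by
  rw [← sum_add_distrib]
  refine sum_congr rfl fun i _ => ?_
  by_cases hp : p i = 0
  · simp [hp]
  · rw [log_div hp (hq i), log_div (hq i) (hr i), log_div hp (hr i)]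
    ring

theorem sum_oneHot_mul_log_div [DecidableEq ι] {t : ι} {p : ι → ℝ}
    (hp : ∀ i, p i = if i = t then 1 else 0) (r : ι → ℝ) :
    ∑ i, p i * log (p i / r i) = -log (r t) := by
  simp [hp]

theorem neg_log_eq_kl_add_kl_add_cross [DecidableEq ι] {t : ι} {p q r : ι → ℝ}
    (hp : ∀ i, p i = if i = t then 1 else 0) (hq : ∀ i, q i ≠ 0) (hr : ∀ i, r i ≠ 0) :
    -log (r t) = ∑ i, p i * log (p i / q i) + ∑ i, q i * log (q i / r i)
      + ∑ i, (p i - q i) * log (q i / r i) := by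
  have hcross : ∑ i, q i * log (q i / r i) + ∑ i, (p i - q i) * log (q i / r i)
      = ∑ i, p i * log (q i / r i) := by
    rw [← sum_add_distrib]
    exact sum_congr rfl fun i _ => by ring
  rw [add_assoc, hcross, sum_mul_log_div_add_sum_mul_log_div p hq hr]
  exact (sum_oneHot_mul_log_div hp r).symm

end Pointwise

theorem sum_sum_mul_mul_add_add {X D : Type*} [Fintype X] [Fintype D] (pX : X → ℝ) (pD : D → ℝ)
    (hpD : ∑ d, pD d = 1) (A : X → ℝ) (B C : X → D → ℝ) :
    ∑ x, ∑ d, pX x * pD d * (A x + B x d + C x d)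
      = ∑ x, pX x * A x + ∑ x, ∑ d, pX x * pD d * B x d + ∑ x, ∑ d, pX x * pD d * C x d := by
  have hA : ∀ x, ∑ d, pX x * pD d * A x = pX x * A x := fun x => by
    rw [← sum_mul, ← mul_sum, hpD, mul_one]
  simp only [mul_add, sum_add_distrib, hA]

theorem prod_rpow_pos {D : Type*} [Fintype D] {w h : D → ℝ} (hh : ∀ d, 0 < h d) :
    0 < ∏ d, h d ^ w d :=
  prod_pos fun d _ => rpow_pos_of_pos (hh d) _

section GeomMean

variable {ι D : Type*} [Fintype ι] [Fintype D]

noncomputable def normalizedGeomMean (w : D → ℝ) (h : D → ι → ℝ) (i : ι) : ℝ :=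
  (∏ d, h d i ^ w d) / ∑ j, ∏ d, h d j ^ w d

variable {w : D → ℝ} {h : D → ι → ℝ}

theorem sum_normalizedGeomMean [Nonempty ι] (hh : ∀ d i, 0 < h d i) :
    ∑ i, normalizedGeomMean w h i = 1 := by
  have hS : 0 < ∑ j, ∏ d, h d j ^ w d :=
    sum_pos (fun j _ => prod_rpow_pos fun d => hh d j) univ_nonempty
  simp only [normalizedGeomMean, ← sum_div, div_self hS.ne']

theorem sum_mul_log_normalizedGeomMean_div (hw : ∑ d, w d = 1) (hh : ∀ d i, 0 < h d i) (i : ι) :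
    ∑ d, w d * log (normalizedGeomMean w h i / h d i) = -log (∑ j, ∏ d, h d j ^ w d) := by
  set S := ∑ j, ∏ d, h d j ^ w d
  have hS : 0 < S := sum_pos (fun j _ => prod_rpow_pos fun d => hh d j) ⟨i, mem_univ i⟩
  have hlog_prod : log (∏ d, h d i ^ w d) = ∑ d, w d * log (h d i) := by
    rw [log_prod fun d _ => (rpow_pos_of_pos (hh d i) _).ne']
    exact sum_congr rfl fun d _ => log_rpow (hh d i) _
  have hterm : ∀ d, w d * log (normalizedGeomMean w h i / h d i)
      = w d * log (∏ d, h d i ^ w d) - w d * log S - w d * log (h d i) := fun d => by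
    rw [normalizedGeomMean, log_div (div_pos (prod_rpow_pos fun d => hh d i) hS).ne' (hh d i).ne',
      log_div (prod_rpow_pos fun d => hh d i).ne' hS.ne']
    ring
  simp only [hterm, sum_sub_distrib, ← sum_mul, hw, one_mul, hlog_prod]
  ring

theorem sum_mul_sum_sub_mul_log_normalizedGeomMean_div [Nonempty ι] (hw : ∑ d, w d = 1)
    (hh : ∀ d i, 0 < h d i) {p s : ι → ℝ} (hp : ∑ i, p i = 1)
    (hs : ∀ i, s i = normalizedGeomMean w h i) :
    ∑ d, w d * ∑ i, (p i - s i) * log (s i / h d i) = 0 := by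
  obtain rfl : s = normalizedGeomMean w h := funext hs
  calc ∑ d, w d * ∑ i, (p i - normalizedGeomMean w h i) * log (normalizedGeomMean w h i / h d i)
      = ∑ i, (p i - normalizedGeomMean w h i) *
          ∑ d, w d * log (normalizedGeomMean w h i / h d i) := by
        simp only [mul_sum]
        rw [sum_comm]
        exact sum_congr rfl fun i _ => sum_congr rfl fun d _ => by ring
    _ = (∑ i, p i - ∑ i, normalizedGeomMean w h i) * -log (∑ j, ∏ d, h d j ^ w d) := by
        simp only [sum_mul_log_normalizedGeomMean_div hw hh, ← sum_sub_distrib, sum_mul]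
    _ = 0 := by rw [hp, sum_normalizedGeomMean hh, sub_self, zero_mul]

end GeomMean

end CrossEntropy

theorem expected_crossEntropy_bias_variance_decomposition_general
    {X D : Type*} [Fintype X] [Fintype D] (c : ℕ)
    (pX : X → ℝ) (pD : D → ℝ)
    (hpD1 : ∑ d, pD d = 1)
    (t : X → Fin c) (π : X → Fin c → ℝ)
    (hπ : ∀ x i, π x i = if i = t x then 1 else 0)
    (πh : D → X → Fin c → ℝ)
    (hπh0 : ∀ d x i, 0 < πh d x i)
    (πs : X → Fin c → ℝ)
    (hπs0 : ∀ x i, 0 < πs x i) :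
    (∑ x, ∑ d, pX x * pD d * (-Real.log (πh d x (t x))) =
        (∑ x, pX x * ∑ i, π x i * Real.log (π x i / πs x i))
        + (∑ x, ∑ d, pX x * pD d * ∑ i, πs x i * Real.log (πs x i / πh d x i))
        + (∑ x, ∑ d, pX x * pD d *
            ∑ i, (π x i - πs x i) * Real.log (πs x i / πh d x i)))
    ∧
    ((∀ x i, πs x i = (∏ d, πh d x i ^ pD d) /
        (∑ j, ∏ d, πh d x j ^ pD d)) →
      ∑ x, ∑ d, pX x * pD d *
        ∑ i, (π x i - πs x i) * Real.log (πs x i / πh d x i) = 0) := by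
  refine ⟨?_, fun hgeo => sum_eq_zero fun x _ => ?_⟩
  · simp only [fun x d => neg_log_eq_kl_add_kl_add_cross (hπ x) (fun i => (hπs0 x i).ne')
      (fun i => (hπh0 d x i).ne')]
    exact sum_sum_mul_mul_add_add pX pD hpD1 _ _ _
  · have : Nonempty (Fin c) := ⟨t x⟩
    simp only [mul_assoc, ← mul_sum]
    rw [sum_mul_sum_sub_mul_log_normalizedGeomMean_div hpD1 (fun d => hπh0 d x) (by simp [hπ x])
      (hgeo x), mul_zero]

/-- Exact bias-variance decomposition of expected cross-entropy loss
(Pfau 2013 / Yang et al. 2020): the expected loss splits into an expected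
bias term D_KL(π ‖ π*), a variance term E_D[D_KL(π* ‖ π̂)], and a cross term
which vanishes when π* is the normalized geometric mean of the predictors. -/
theorem expected_crossEntropy_bias_variance_decomposition
    {X D : Type*} [Fintype X] [Fintype D] [Nonempty X] [Nonempty D] (c : ℕ)
    (pX : X → ℝ) (pD : D → ℝ)
    (hpX0 : ∀ x, 0 ≤ pX x) (hpX1 : ∑ x, pX x = 1)
    (hpD0 : ∀ d, 0 ≤ pD d) (hpD1 : ∑ d, pD d = 1)
    (t : X → Fin c) (π : X → Fin c → ℝ)
    (hπ : ∀ x i, π x i = if i = t x then 1 else 0)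
    (πh : D → X → Fin c → ℝ)
    (hπh0 : ∀ d x i, 0 < πh d x i) (hπh1 : ∀ d x, ∑ i, πh d x i = 1)
    (πs : X → Fin c → ℝ)
    (hπs0 : ∀ x i, 0 < πs x i) (hπs1 : ∀ x, ∑ i, πs x i = 1) :
    (∑ x, ∑ d, pX x * pD d * (-Real.log (πh d x (t x))) =
        (∑ x, pX x * ∑ i, π x i * Real.log (π x i / πs x i))
        + (∑ x, ∑ d, pX x * pD d * ∑ i, πs x i * Real.log (πs x i / πh d x i))
        + (∑ x, ∑ d, pX x * pD d *
            ∑ i, (π x i - πs x i) * Real.log (πs x i / πh d x i)))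
    ∧
    ((∀ x i, πs x i = (∏ d, πh d x i ^ pD d) /
        (∑ j, ∏ d, πh d x j ^ pD d)) →
      ∑ x, ∑ d, pX x * pD d *
        ∑ i, (π x i - πs x i) * Real.log (πs x i / πh d x i) = 0) :=
  expected_crossEntropy_bias_variance_decomposition_general c pX pD hpD1 t π hπ πh hπh0 πs hπs0
end

section
/- Let p(d) be a probability mass function on a finite nonempty set D, and for each d let π̂(d) ∈ Δ^{c−1} be strictly positive. Let π* be the normalized geometric mean: π*ᵢ ∝ ∏_d π̂ᵢ(d)^{p(d)}. Then E_D[D_KL(π* ‖ π̂(d))] = −log Z where Z = Σⱼ ∏_d π̂ⱼ(d)^{p(d)} ≤ 1, so the 'variance' term E_D[D_KL(π* ‖ π̂(d))] equals −log Z ≥ 0, and it is zero if and only if π̂(d) is the same vector for all d in the support of p. -/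
open Finset

/-! With `G j = ∏ d, π̂_d(j) ^ p(d)` and `π* = G / Z`, the `p`-average of `log (π*_j / π̂_d(j))` is
`log π*_j - log G_j = -log Z` for every class `j`, so averaging over `π*` gives the closed form.
Weighted AM–GM bounds `G j` by `∑ d, p(d) π̂_d(j)`, and these bounds sum to `1`; hence `Z ≤ 1`, with
equality exactly when every AM–GM is tight, i.e. when the `π̂_d` agree on the support of `p`. -/

namespace GeomPool

variable {D ι : Type*} [Fintype D]

noncomputable def geomPool (p : D → ℝ) (π : D → ι → ℝ) (i : ι) : ℝ := ∏ d, π d i ^ p d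

noncomputable def geomPoolMass [Fintype ι] (p : D → ℝ) (π : D → ι → ℝ) : ℝ :=
  ∑ j, geomPool p π j

variable {p : D → ℝ} {π : D → ι → ℝ}

lemma geomPool_pos (hπ : ∀ d i, 0 < π d i) (i : ι) : 0 < geomPool p π i :=
  prod_pos fun d _ => Real.rpow_pos_of_pos (hπ d i) _

lemma log_geomPool (hπ : ∀ d i, 0 < π d i) (i : ι) :
    Real.log (geomPool p π i) = ∑ d, p d * Real.log (π d i) := by
  rw [geomPool, Real.log_prod fun d _ => (Real.rpow_pos_of_pos (hπ d i) _).ne']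
  exact sum_congr rfl fun d _ => Real.log_rpow (hπ d i) _

lemma geomPool_le_sum_mul (hp0 : ∀ d, 0 ≤ p d) (hp1 : ∑ d, p d = 1) (hπ0 : ∀ d i, 0 ≤ π d i)
    (j : ι) : geomPool p π j ≤ ∑ d, p d * π d j :=
  Real.geom_mean_le_arith_mean_weighted univ p (π · j) (fun d _ => hp0 d) hp1 fun d _ => hπ0 d j

lemma geomPool_eq_sum_mul_iff (hp0 : ∀ d, 0 ≤ p d) (hp1 : ∑ d, p d = 1)
    (hπ0 : ∀ d i, 0 ≤ π d i) (j : ι) :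
    geomPool p π j = ∑ d, p d * π d j ↔ ∀ d d', 0 < p d → 0 < p d' → π d j = π d' j := by
  rw [geomPool, Real.geom_mean_eq_arith_mean_weighted_iff_of_nonneg univ p (π · j)
    (fun d _ => hp0 d) hp1 fun d _ => hπ0 d j]
  simp only [mem_univ, true_implies, (hp0 _).lt_iff_ne']
  grind

variable [Fintype ι]

theorem sum_mul_sum_mul_log_div_geomPool (hp1 : ∑ d, p d = 1) (hπ : ∀ d i, 0 < π d i) :
    ∑ d, p d * ∑ i, geomPool p π i / geomPoolMass p π *
      Real.log (geomPool p π i / geomPoolMass p π / π d i) = -Real.log (geomPoolMass p π) := by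
  set Z := geomPoolMass p π
  have hZ : ∀ i, 0 < Z := fun i =>
    (geomPool_pos hπ i).trans_le (single_le_sum (fun j _ => (geomPool_pos hπ j).le) (mem_univ i))
  have average_log_ratio (i : ι) :
      ∑ d, p d * Real.log (geomPool p π i / Z / π d i) = -Real.log Z := by
    simp only [Real.log_div (div_pos (geomPool_pos hπ i) (hZ i)).ne' (hπ _ i).ne', mul_sub,
      sum_sub_distrib, ← sum_mul, hp1, one_mul, ← log_geomPool hπ,
      Real.log_div (geomPool_pos hπ i).ne' (hZ i).ne']
    ring
  calc ∑ d, p d * ∑ i, geomPool p π i / Z * Real.log (geomPool p π i / Z / π d i)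
      = ∑ i, geomPool p π i / Z * ∑ d, p d * Real.log (geomPool p π i / Z / π d i) := by
        simp only [mul_sum]
        rw [sum_comm]
        exact sum_congr rfl fun i _ => sum_congr rfl fun d _ => by ring
    _ = Z / Z * -Real.log Z := by
        simp only [average_log_ratio]
        rw [← sum_mul, ← sum_div]
        rfl
    _ = -Real.log Z := by
        -- `Z = 0` only for empty `ι`, and then both sides vanish because `log 0 = 0`
        rcases eq_or_ne Z 0 with h | h <;> simp [h]

lemma sum_sum_mul_eq_one (hp1 : ∑ d, p d = 1) (hπ1 : ∀ d, ∑ i, π d i = 1) :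
    ∑ j, ∑ d, p d * π d j = 1 := by
  rw [sum_comm]
  simp [← mul_sum, hπ1, hp1]

lemma geomPoolMass_le_one (hp0 : ∀ d, 0 ≤ p d) (hp1 : ∑ d, p d = 1) (hπ0 : ∀ d i, 0 ≤ π d i)
    (hπ1 : ∀ d, ∑ i, π d i = 1) : geomPoolMass p π ≤ 1 :=
  (sum_le_sum fun j _ => geomPool_le_sum_mul hp0 hp1 hπ0 j).trans_eq (sum_sum_mul_eq_one hp1 hπ1)

lemma geomPoolMass_eq_one_iff (hp0 : ∀ d, 0 ≤ p d) (hp1 : ∑ d, p d = 1)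
    (hπ0 : ∀ d i, 0 ≤ π d i) (hπ1 : ∀ d, ∑ i, π d i = 1) :
    geomPoolMass p π = 1 ↔ ∀ d d', 0 < p d → 0 < p d' → π d = π d' := by
  rw [← sum_sum_mul_eq_one hp1 hπ1, geomPoolMass,
    sum_eq_sum_iff_of_le fun j _ => geomPool_le_sum_mul hp0 hp1 hπ0 j]
  simp only [mem_univ, true_implies, geomPool_eq_sum_mul_iff hp0 hp1 hπ0, funext_iff]
  grind

end GeomPool

open GeomPool in
theorem kl_variance_term_closed_form_general
    {D : Type*} [Fintype D] (c : ℕ)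
    (p : D → ℝ) (hp0 : ∀ d, 0 ≤ p d) (hp1 : ∑ d, p d = 1)
    (πh : D → Fin c → ℝ)
    (hπh0 : ∀ d i, 0 < πh d i) (hπh1 : ∀ d, ∑ i, πh d i = 1)
    (Z : ℝ) (hZ : Z = ∑ j, ∏ d, πh d j ^ p d)
    (πs : Fin c → ℝ) (hπs : ∀ i, πs i = (∏ d, πh d i ^ p d) / Z) :
    (∑ d, p d * (∑ i, πs i * Real.log (πs i / πh d i)) = -Real.log Z)
    ∧ Z ≤ 1
    ∧ 0 ≤ ∑ d, p d * (∑ i, πs i * Real.log (πs i / πh d i))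
    ∧ ((∑ d, p d * (∑ i, πs i * Real.log (πs i / πh d i)) = 0) ↔
        ∀ d d', 0 < p d → 0 < p d' → πh d = πh d') := by
  obtain rfl : πs = fun i => geomPool p πh i / Z := funext hπs
  obtain rfl : Z = geomPoolMass p πh := hZ
  have hπh0' d i : 0 ≤ πh d i := (hπh0 d i).le
  obtain ⟨d, -, -⟩ := exists_ne_zero_of_sum_ne_zero (hp1.trans_ne one_ne_zero)
  obtain ⟨i, -, -⟩ := exists_ne_zero_of_sum_ne_zero ((hπh1 d).trans_ne one_ne_zero)
  have hZpos : 0 < geomPoolMass p πh :=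
    sum_pos (fun j _ => geomPool_pos hπh0 j) ⟨i, mem_univ i⟩
  have hZle := geomPoolMass_le_one hp0 hp1 hπh0' hπh1
  rw [sum_mul_sum_mul_log_div_geomPool hp1 hπh0, neg_eq_zero,
    Real.log_eq_zero, or_iff_right hZpos.ne', or_iff_left (by linarith),
    geomPoolMass_eq_one_iff hp0 hp1 hπh0' hπh1]
  exact ⟨rfl, hZle, neg_nonneg.2 (Real.log_nonpos hZpos.le hZle), Iff.rfl⟩

/-- Closed form and nonnegativity of the KL variance term: for the normalized
geometric mean π* of the predictors, E_D[D_KL(π* ‖ π̂(d))] = −log Z with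
Z ≤ 1, hence the term is nonnegative, and it vanishes iff π̂(d) is the same
vector for all d in the support of p. -/
theorem kl_variance_term_closed_form
    {D : Type*} [Fintype D] [Nonempty D] (c : ℕ)
    (p : D → ℝ) (hp0 : ∀ d, 0 ≤ p d) (hp1 : ∑ d, p d = 1)
    (πh : D → Fin c → ℝ)
    (hπh0 : ∀ d i, 0 < πh d i) (hπh1 : ∀ d, ∑ i, πh d i = 1)
    (Z : ℝ) (hZ : Z = ∑ j, ∏ d, πh d j ^ p d)
    (πs : Fin c → ℝ) (hπs : ∀ i, πs i = (∏ d, πh d i ^ p d) / Z) :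
    (∑ d, p d * (∑ i, πs i * Real.log (πs i / πh d i)) = -Real.log Z)
    ∧ Z ≤ 1
    ∧ 0 ≤ ∑ d, p d * (∑ i, πs i * Real.log (πs i / πh d i))
    ∧ ((∑ d, p d * (∑ i, πs i * Real.log (πs i / πh d i)) = 0) ↔
        ∀ d d', 0 < p d → 0 < p d' → πh d = πh d') :=
  kl_variance_term_closed_form_general c p hp0 hp1 πh hπh0 hπh1 Z hZ πs hπs
end
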